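/- Stein's lemma, one-dimensional: let σ > 0 and let γ be the Gaussian measure on ℝ with mean 0 and variance σ². If f : ℝ → ℝ is differentiable and L-Lipschitz for some L ≥ 0, then σ² · ∫ f′(z) dγ(z) = ∫ z · f(z) dγ(z). -/

import Mathlib

/-!
The Gaussian density `p` of `N(μ, v)` solves `v p' = -(x - μ) p`, so integrating `f' p` by parts
over `ℝ` gives `v ∫ f' p = ∫ (x - μ) f p`. For Lipschitz `f` the three integrands `f p`, `f' p`
and `(x - μ) f p` are integrable, since `f'` is bounded and `f` and `x - μ` are square-integrable
under a Gaussian, and integrability of `f p` is what makes the boundary terms vanish.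
-/

open MeasureTheory ProbabilityTheory
open scoped NNReal

theorem LipschitzWith.comp_memLp_of_isFiniteMeasure {α E F : Type*} [MeasurableSpace α]
    {μ : Measure α} [IsFiniteMeasure μ] [NormedAddCommGroup E] [NormedAddCommGroup F]
    {p : ENNReal} {K : ℝ≥0} {f : α → E} {g : E → F} (hg : LipschitzWith K g)
    (hf : MemLp f p μ) : MemLp (g ∘ f) p μ := by
  have hbound : ∀ x, ‖g (f x)‖ ≤ ‖g 0‖ + K * ‖f x‖ := fun x => by
    have := hg.norm_sub_le (f x) 0
    rw [sub_zero] at this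
    linarith [norm_le_norm_add_norm_sub' (g (f x)) (g 0)]
  refine ((memLp_const ‖g 0‖).add (hf.norm.const_mul K)).of_le
    (hg.continuous.comp_aestronglyMeasurable hf.1) (.of_forall fun x => ?_)
  simpa [abs_of_nonneg (by positivity : 0 ≤ ‖g 0‖ + K * ‖f x‖)] using hbound x

namespace ProbabilityTheory

theorem hasDerivAt_gaussianPDFReal (μ : ℝ) (v : ℝ≥0) (x : ℝ) :
    HasDerivAt (gaussianPDFReal μ v) (-((x - μ) / v) * gaussianPDFReal μ v x) x := by
  have h : HasDerivAt (fun y => -(y - μ) ^ 2 / (2 * (v : ℝ))) (-((x - μ) / v)) x :=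
    ((((hasDerivAt_id x).sub_const μ).pow 2).neg.div_const (2 * (v : ℝ))).congr_deriv
      (by simp only [id]; ring)
  rw [gaussianPDFReal_def]
  exact (h.exp.const_mul _).congr_deriv (by ring)

theorem integrable_gaussianReal_iff {μ : ℝ} {v : ℝ≥0} (hv : v ≠ 0) {g : ℝ → ℝ} :
    Integrable g (gaussianReal μ v) ↔ Integrable (fun x => gaussianPDFReal μ v x * g x) := by
  rw [gaussianReal_of_var_ne_zero μ hv, integrable_withDensity_iff_integrable_smul'
    (measurable_gaussianPDF μ v) (.of_forall fun _ => gaussianPDF_lt_top)]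
  simp only [toReal_gaussianPDF, smul_eq_mul]

theorem variance_mul_integral_deriv_gaussianReal {μ : ℝ} {v : ℝ≥0} (hv : v ≠ 0) {f : ℝ → ℝ}
    (hf : Differentiable ℝ f) (hf_int : Integrable f (gaussianReal μ v))
    (hf'_int : Integrable (deriv f) (gaussianReal μ v))
    (hxf_int : Integrable (fun x => (x - μ) * f x) (gaussianReal μ v)) :
    v * ∫ x, deriv f x ∂gaussianReal μ v = ∫ x, (x - μ) * f x ∂gaussianReal μ v := by
  rw [integrable_gaussianReal_iff hv] at hf_int hf'_int hxf_int
  have hp'f : ∀ x, f x * (-((x - μ) / v) * gaussianPDFReal μ v x)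
      = -(v : ℝ)⁻¹ * (gaussianPDFReal μ v x * ((x - μ) * f x)) := fun x => by ring
  have hibp := integral_mul_deriv_eq_deriv_mul_of_integrable
    (fun x _ => (hf x).hasDerivAt) (fun x _ => hasDerivAt_gaussianPDFReal μ v x)
    ((hxf_int.const_mul _).congr (.of_forall fun x => (hp'f x).symm))
    (by simpa only [Pi.mul_def, mul_comm] using hf'_int)
    (by simpa only [Pi.mul_def, mul_comm] using hf_int)
  simp_rw [hp'f, integral_const_mul, mul_comm (deriv f _)] at hibp
  simp only [integral_gaussianReal_eq_integral_smul hv, smul_eq_mul]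
  rw [neg_mul, neg_inj, inv_mul_eq_iff_eq_mul₀ (NNReal.coe_ne_zero.mpr hv)] at hibp
  exact hibp.symm

theorem variance_mul_integral_deriv_gaussianReal_of_lipschitzWith {μ : ℝ} {v : ℝ≥0} (hv : v ≠ 0)
    {f : ℝ → ℝ} {K : ℝ≥0} (hf : Differentiable ℝ f) (hlip : LipschitzWith K f) :
    v * ∫ x, deriv f x ∂gaussianReal μ v = ∫ x, (x - μ) * f x ∂gaussianReal μ v := by
  have hf_memLp : MemLp f 2 (gaussianReal μ v) :=
    hlip.comp_memLp_of_isFiniteMeasure (memLp_id_gaussianReal 2)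
  have hx_memLp : MemLp (fun x => x - μ) 2 (gaussianReal μ v) :=
    (memLp_id_gaussianReal 2).sub (memLp_const μ)
  refine variance_mul_integral_deriv_gaussianReal hv hf (hf_memLp.integrable one_le_two) ?_
    (hx_memLp.integrable_mul hf_memLp)
  exact .of_bound (measurable_deriv f).aestronglyMeasurable K
    (.of_forall fun x => norm_deriv_le_of_lipschitz hlip)

end ProbabilityTheory

/-- Stein's lemma in one dimension: for the Gaussian measure `γ = N(0, σ²)` and a
differentiable `L`-Lipschitz function `f : ℝ → ℝ`, we have
`σ² ∫ f'(z) dγ(z) = ∫ z f(z) dγ(z)`. -/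
theorem stmt2 (σ : ℝ) (hσ : 0 < σ) (L : ℝ) (hL : 0 ≤ L)
    (f : ℝ → ℝ) (hf : Differentiable ℝ f)
    (hLip : ∀ z z' : ℝ, |f z - f z'| ≤ L * |z - z'|) :
    σ ^ 2 * (∫ z, deriv f z ∂(gaussianReal 0 ⟨σ ^ 2, sq_nonneg σ⟩))
      = ∫ z, z * f z ∂(gaussianReal 0 ⟨σ ^ 2, sq_nonneg σ⟩) := by
  have hv : (⟨σ ^ 2, sq_nonneg σ⟩ : ℝ≥0) ≠ 0 := NNReal.coe_ne_zero.mp (pow_pos hσ 2).ne'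
  have hlip : LipschitzWith ⟨L, hL⟩ f := .of_dist_le_mul hLip
  have h := variance_mul_integral_deriv_gaussianReal_of_lipschitzWith (μ := 0) hv hf hlip
  simp only [sub_zero] at h
  exact h
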